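/- arXiv:math/9512210 — 3 statements merged into one kernel-verified Lean document; each statement's English description precedes it below -/
import Mathlib

section
/- Let A be a Banach algebra with a bounded approximate identity (e_ν)_{ν∈Λ}, and let S be a closed subalgebra of A₊. Define the bar coboundary δrⁿ on S-relative cochains by (δrⁿf)(a₀,...,a_{n+1}) = Σ_{i=0}^{n} (-1)^i f(a₀,...,a_i a_{i+1},...,a_{n+1}). Then for every n ≥ 1 and every f ∈ C_Sⁿ(A) with δrⁿf = 0, there exists g ∈ C_S^{n-1}(A) such that δr^{n-1}g = f. In other words, the cohomology HRⁿ_S(A) of the complex (C_S•(A), δr) vanishes for all n ≥ 1. -/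
/-!
The cone construction `f ↦ f(e, ·)` is a contracting homotopy of the bar complex: expanding
`δr f (b, a₀, …, aₙ₊₁) = 0` gives `f(b a₀, a₁, …) = δr (f(b, ·)) (a)`. Take `b = e_ν` along a
bounded approximate identity and let `g` be a pointwise limit of the bounded family `f(e_ν, ·)`
along an ultrafilter finer than the index filter (it exists since closed discs of `ℂ` are
compact). Then `δr g = f` because `e_ν a₀ → a₀`. The inner relativity conditions of `g` are
inherited from `f`; by the relativity of `f`, the two sides of the outer one are limits of
`f(e_ν s, a)` and `f(s e_ν, a)`, and for `s = λ + x ∈ A₊` both tend to `λ g(a) + f(x, a)`.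
-/

open Finset Filter

/-- The product `s·a ∈ A` of `s ∈ A₊` and `a ∈ A`. -/
noncomputable def opL {A : Type*} [NonUnitalNormedRing A] [NormedSpace ℂ A]
    [IsScalarTower ℂ A A] [SMulCommClass ℂ A A]
    (s : Unitization ℂ A) (a : A) : A := (s * (a : Unitization ℂ A)).snd

/-- The product `a·s ∈ A` of `a ∈ A` and `s ∈ A₊`. -/
noncomputable def opR {A : Type*} [NonUnitalNormedRing A] [NormedSpace ℂ A]
    [IsScalarTower ℂ A A] [SMulCommClass ℂ A A]
    (a : A) (s : Unitization ℂ A) : A := ((a : Unitization ℂ A) * s).snd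

/-- `S`-relativity for an `(n+1)`-linear functional (`n`-cochain) on `A`. -/
def IsRelCochain {A : Type*} [NonUnitalNormedRing A] [NormedSpace ℂ A]
    [IsScalarTower ℂ A A] [SMulCommClass ℂ A A]
    (S : Subalgebra ℂ (Unitization ℂ A)) {n : ℕ}
    (f : (Fin (n + 1) → A) → ℂ) : Prop :=
  (∀ s ∈ S, ∀ a : Fin (n + 1) → A,
      f (Function.update a 0 (opL s (a 0)))
        = f (Function.update a (Fin.last n) (opR (a (Fin.last n)) s))) ∧
  (∀ s ∈ S, ∀ a : Fin (n + 1) → A, ∀ j : Fin n,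
      f (Function.update a j.castSucc (opR (a j.castSucc) s))
        = f (Function.update a j.succ (opL s (a j.succ))))

/-- Merge the arguments `a i` and `a (i+1)` of an `(n+2)`-tuple into a product. -/
def cycMerge {A : Type*} [Mul A] {n : ℕ} (a : Fin (n + 2) → A) (i : Fin (n + 1)) :
    Fin (n + 1) → A := fun j =>
  if (j : ℕ) < (i : ℕ) then a j.castSucc
  else if (j : ℕ) = (i : ℕ) then a j.castSucc * a j.succ
  else a j.succ

/-- The bar coboundary
`(δrⁿf)(a₀,...,a_{n+1}) = Σ_{i=0}^{n} (-1)^i f(a₀,...,a_i a_{i+1},...,a_{n+1})`. -/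
noncomputable def barδ {A : Type*} [Mul A] {n : ℕ}
    (g : (Fin (n + 1) → A) → ℂ) : (Fin (n + 2) → A) → ℂ := fun a =>
  ∑ i : Fin (n + 1), ((-1 : ℂ) ^ (i : ℕ)) * g (cycMerge a i)

open Topology

namespace ContinuousMultilinearMap

variable {𝕜 : Type*} [NontriviallyNormedField 𝕜] {ι : Type*} [Fintype ι] {E : ι → Type*}
  [∀ i, SeminormedAddCommGroup (E i)] [∀ i, NormedSpace 𝕜 (E i)]
  {G : Type*} [NormedAddCommGroup G] [NormedSpace 𝕜 G]

theorem exists_tendsto_apply_of_norm_le [ProperSpace G] {α : Type*} (U : Ultrafilter α)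
    (F : α → ContinuousMultilinearMap 𝕜 E G) {K : ℝ} (hF : ∀ i, ‖F i‖ ≤ K) :
    ∃ g : ContinuousMultilinearMap 𝕜 E G, ∀ m, Tendsto (fun i => F i m) U (𝓝 (g m)) := by
  have hbound : ∀ m i, ‖F i m‖ ≤ K * ∏ j, ‖m j‖ := fun m i =>
    ((F i).le_opNorm m).trans (by gcongr; exact hF i)
  have hlim : ∀ m, ∃ y, Tendsto (fun i => F i m) U (𝓝 y) := fun m => by
    obtain ⟨y, -, hy⟩ := (isCompact_closedBall (0 : G) (K * ∏ j, ‖m j‖)).ultrafilter_le_nhds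
      (U.map fun i => F i m) (by
        rw [Ultrafilter.coe_map, le_principal_iff, Filter.mem_map]
        exact univ_mem' fun i => mem_closedBall_zero_iff.2 (hbound m i))
    exact ⟨y, hy⟩
  choose L hL using hlim
  let L' : MultilinearMap 𝕜 E G :=
    { toFun := L
      map_update_add' := fun m j x y => tendsto_nhds_unique (hL _) <| by
        simpa only [map_update_add] using (hL _).add (hL _)
      map_update_smul' := fun m j c x => tendsto_nhds_unique (hL _) <| by
        simpa only [map_update_smul] using (hL _).const_smul c }
  exact ⟨L'.mkContinuous K fun m =>
    le_of_tendsto (hL m).norm (Eventually.of_forall (hbound m)), hL⟩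

end ContinuousMultilinearMap

section BarComplex

variable {A : Type*} [Mul A] {n : ℕ}

theorem cycMerge_cons_zero (b : A) (a : Fin (n + 2) → A) :
    cycMerge (Fin.cons b a) 0 = Function.update a 0 (b * a 0) := by
  funext j
  refine Fin.cases ?_ (fun m => ?_) j
  · simp [cycMerge]
  · simp [cycMerge, Fin.succ_ne_zero]

theorem cycMerge_cons_succ (b : A) (a : Fin (n + 2) → A) (k : Fin (n + 1)) :
    cycMerge (Fin.cons b a) k.succ = Fin.cons b (cycMerge a k) := by
  funext j
  refine Fin.cases ?_ (fun m => ?_) j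
  · simp [cycMerge]
  · simp only [cycMerge, Fin.val_succ, ← Fin.succ_castSucc, Fin.cons_succ]
    split_ifs <;> first | rfl | omega

theorem barδ_cons (f : (Fin (n + 2) → A) → ℂ) (b : A) (a : Fin (n + 2) → A) :
    barδ f (Fin.cons b a) =
      f (Function.update a 0 (b * a 0)) - barδ (fun a' => f (Fin.cons b a')) a := by
  simp only [barδ, Fin.sum_univ_succ (n := n + 1), cycMerge_cons_zero, cycMerge_cons_succ,
    Fin.val_zero, pow_zero, one_mul, Fin.val_succ, pow_succ, mul_neg_one, neg_mul,
    Finset.sum_neg_distrib, sub_eq_add_neg]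

theorem tendsto_barδ {α : Type*} {l : Filter α} {F : α → (Fin (n + 1) → A) → ℂ}
    {g : (Fin (n + 1) → A) → ℂ} (hg : ∀ a, Tendsto (fun i => F i a) l (𝓝 (g a)))
    (a : Fin (n + 2) → A) : Tendsto (fun i => barδ (F i) a) l (𝓝 (barδ g a)) :=
  tendsto_finsetSum _ fun _ _ => (hg _).const_mul _

end BarComplex

theorem barδ_eq_of_tendsto_cons {A : Type*} [Mul A] [AddCommMonoid A] [Module ℂ A]
    [TopologicalSpace A] {n : ℕ} (f : ContinuousMultilinearMap ℂ (fun _ : Fin (n + 2) => A) ℂ)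
    (hcocycle : barδ ⇑f = 0) {ι : Type*} {l : Filter ι} [l.NeBot] {e : ι → A}
    (hleft : ∀ a : A, Tendsto (fun i => e i * a) l (𝓝 a)) {g : (Fin (n + 1) → A) → ℂ}
    (hg : ∀ a, Tendsto (fun i => f (Fin.cons (e i) a)) l (𝓝 (g a))) : barδ g = f := by
  funext a
  have hcone : ∀ i, barδ (fun a' => f (Fin.cons (e i) a')) a =
      f (Function.update a 0 (e i * a 0)) := fun i => by
    have h := congrFun hcocycle (Fin.cons (e i) a)
    rwa [barδ_cons, Pi.zero_apply, sub_eq_zero, eq_comm] at h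
  refine tendsto_nhds_unique (tendsto_barδ hg a) ?_
  simp only [hcone]
  have hupd : Tendsto (fun i => Function.update a 0 (e i * a 0)) l (𝓝 a) := by
    simpa using (tendsto_const_nhds (x := a)).update 0 (hleft (a 0))
  exact ((map_continuous f).tendsto a).comp hupd

section RelativeCochains

variable {A : Type*} [NonUnitalNormedRing A] [NormedSpace ℂ A] [IsScalarTower ℂ A A]
  [SMulCommClass ℂ A A] {S : Subalgebra ℂ (Unitization ℂ A)} {n : ℕ}

theorem opL_eq (s : Unitization ℂ A) (a : A) : opL s a = s.fst • a + s.snd * a := by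
  simp [opL]

theorem opR_eq (a : A) (s : Unitization ℂ A) : opR a s = s.fst • a + a * s.snd := by
  simp [opR]

namespace IsRelCochain

variable {f : (Fin (n + 2) → A) → ℂ} {s : Unitization ℂ A}

theorem cons_opR (hf : IsRelCochain S f) (hs : s ∈ S) (b : A) (a : Fin (n + 1) → A) :
    f (Fin.cons (opR b s) a) = f (Fin.cons b (Function.update a 0 (opL s (a 0)))) := by
  simpa [Fin.cons_update] using hf.2 s hs (Fin.cons b a) 0

theorem cons_opL (hf : IsRelCochain S f) (hs : s ∈ S) (b : A) (a : Fin (n + 1) → A) :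
    f (Fin.cons (opL s b) a) =
      f (Fin.cons b (Function.update a (Fin.last n) (opR (a (Fin.last n)) s))) := by
  simpa [Fin.cons_update, ← Fin.succ_last] using hf.1 s hs (Fin.cons b a)

theorem cons_update (hf : IsRelCochain S f) (hs : s ∈ S) (b : A) (a : Fin (n + 1) → A)
    (j : Fin n) :
    f (Fin.cons b (Function.update a j.castSucc (opR (a j.castSucc) s))) =
      f (Fin.cons b (Function.update a j.succ (opL s (a j.succ)))) := by
  simpa [Fin.cons_update, ← Fin.succ_castSucc] using hf.2 s hs (Fin.cons b a) j.succ

end IsRelCochain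

variable (f : ContinuousMultilinearMap ℂ (fun _ : Fin (n + 2) => A) ℂ) {ι : Type*}
  {l : Filter ι} {e : ι → A} {g : (Fin (n + 1) → A) → ℂ}

theorem tendsto_apply_cons_opR (hg : ∀ a, Tendsto (fun i => f (Fin.cons (e i) a)) l (𝓝 (g a)))
    (hleft : ∀ a : A, Tendsto (fun i => e i * a) l (𝓝 a)) (s : Unitization ℂ A)
    (a : Fin (n + 1) → A) :
    Tendsto (fun i => f (Fin.cons (opR (e i) s) a)) l (𝓝 (s.fst * g a + f (Fin.cons s.snd a))) := by
  have hsnd : Tendsto (fun i => f (Fin.cons (e i * s.snd) a)) l (𝓝 (f (Fin.cons s.snd a))) :=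
    ((map_continuous f).tendsto _).comp ((hleft s.snd).finCons tendsto_const_nhds)
  convert ((hg a).const_mul s.fst).add hsnd using 2 with i
  simp only [opR_eq, ← f.curryLeft_apply, map_add, map_smul, add_apply, smul_apply, smul_eq_mul]

theorem tendsto_apply_cons_opL (hg : ∀ a, Tendsto (fun i => f (Fin.cons (e i) a)) l (𝓝 (g a)))
    (hright : ∀ a : A, Tendsto (fun i => a * e i) l (𝓝 a)) (s : Unitization ℂ A)
    (a : Fin (n + 1) → A) :
    Tendsto (fun i => f (Fin.cons (opL s (e i)) a)) l (𝓝 (s.fst * g a + f (Fin.cons s.snd a))) := by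
  have hsnd : Tendsto (fun i => f (Fin.cons (s.snd * e i) a)) l (𝓝 (f (Fin.cons s.snd a))) :=
    ((map_continuous f).tendsto _).comp ((hright s.snd).finCons tendsto_const_nhds)
  convert ((hg a).const_mul s.fst).add hsnd using 2 with i
  simp only [opL_eq, ← f.curryLeft_apply, map_add, map_smul, add_apply, smul_apply, smul_eq_mul]

theorem isRelCochain_of_tendsto_cons [l.NeBot] (hf : IsRelCochain S f)
    (hleft : ∀ a : A, Tendsto (fun i => e i * a) l (𝓝 a))
    (hright : ∀ a : A, Tendsto (fun i => a * e i) l (𝓝 a))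
    (hg : ∀ a, Tendsto (fun i => f (Fin.cons (e i) a)) l (𝓝 (g a))) : IsRelCochain S g := by
  refine ⟨fun s hs a => ?_, fun s hs a j => ?_⟩
  · have hL : Tendsto (fun i => f (Fin.cons (opR (e i) s) a)) l
        (𝓝 (g (Function.update a 0 (opL s (a 0))))) := by
      simpa only [hf.cons_opR hs] using hg _
    have hR : Tendsto (fun i => f (Fin.cons (opL s (e i)) a)) l
        (𝓝 (g (Function.update a (Fin.last n) (opR (a (Fin.last n)) s)))) := by
      simpa only [hf.cons_opL hs] using hg _
    exact (tendsto_nhds_unique hL (tendsto_apply_cons_opR f hg hleft s a)).trans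
      (tendsto_nhds_unique hR (tendsto_apply_cons_opL f hg hright s a)).symm
  · exact tendsto_nhds_unique (hg _) (by simpa only [hf.cons_update hs] using hg _)

end RelativeCochains

theorem bar_cohomology_vanishes_general
    {A : Type*} [NonUnitalNormedRing A] [NormedSpace ℂ A]
    [IsScalarTower ℂ A A] [SMulCommClass ℂ A A]
    -- bounded approximate identity `(e_ν)_{ν ∈ Λ}` for `A`
    {ι : Type*} (l : Filter ι) [l.NeBot] (e : ι → A) (C : ℝ)
    (hbdd : ∀ i, ‖e i‖ ≤ C)
    (hleft : ∀ a : A, Tendsto (fun i => e i * a) l (nhds a))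
    (hright : ∀ a : A, Tendsto (fun i => a * e i) l (nhds a))
    (S : Subalgebra ℂ (Unitization ℂ A))
    (n : ℕ)
    (f : ContinuousMultilinearMap ℂ (fun _ : Fin (n + 2) => A) ℂ)
    (hf : IsRelCochain S (⇑f)) (hcocycle : barδ (⇑f) = 0) :
    ∃ g : ContinuousMultilinearMap ℂ (fun _ : Fin (n + 1) => A) ℂ,
      IsRelCochain S (⇑g) ∧ barδ (⇑g) = ⇑f := by
  let U := Ultrafilter.of l
  have hleftU (a : A) : Tendsto (fun i => e i * a) U (𝓝 a) :=
    (hleft a).mono_left (Ultrafilter.of_le l)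
  have hrightU (a : A) : Tendsto (fun i => a * e i) U (𝓝 a) :=
    (hright a).mono_left (Ultrafilter.of_le l)
  obtain ⟨g, hg⟩ := ContinuousMultilinearMap.exists_tendsto_apply_of_norm_le U
    (fun i => f.curryLeft (e i)) (K := ‖f.curryLeft‖ * C) fun i =>
      (f.curryLeft.le_opNorm (e i)).trans (by gcongr; exact hbdd i)
  exact ⟨g, isRelCochain_of_tendsto_cons f hf hleftU hrightU hg,
    barδ_eq_of_tendsto_cons f hcocycle hleftU hg⟩

/-- `HRⁿ_S(A) = 0` for `n ≥ 1` when `A` has a bounded approximate identity. -/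
theorem bar_cohomology_vanishes
    {A : Type*} [NonUnitalNormedRing A] [NormedSpace ℂ A]
    [IsScalarTower ℂ A A] [SMulCommClass ℂ A A] [CompleteSpace A]
    -- bounded approximate identity `(e_ν)_{ν ∈ Λ}` for `A`
    {ι : Type*} (l : Filter ι) [l.NeBot] (e : ι → A) (C : ℝ)
    (hbdd : ∀ i, ‖e i‖ ≤ C)
    (hleft : ∀ a : A, Tendsto (fun i => e i * a) l (nhds a))
    (hright : ∀ a : A, Tendsto (fun i => a * e i) l (nhds a))
    (S : Subalgebra ℂ (Unitization ℂ A)) (hS : IsClosed (S : Set (Unitization ℂ A)))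
    (n : ℕ)
    (f : ContinuousMultilinearMap ℂ (fun _ : Fin (n + 2) => A) ℂ)
    (hf : IsRelCochain S (⇑f)) (hcocycle : barδ (⇑f) = 0) :
    ∃ g : ContinuousMultilinearMap ℂ (fun _ : Fin (n + 1) => A) ℂ,
      IsRelCochain S (⇑g) ∧ barδ (⇑g) = ⇑f :=
  bar_cohomology_vanishes_general l e C hbdd hleft hright S n f hf hcocycle
end

section
/- Let A₁,...,Aₘ be Banach algebras with identities e₁,...,eₘ, and let A = ⊕ᵢAᵢ be their Banach algebra direct sum. Let M be a Banach A-bimodule and let B be the closed subalgebra of A generated by {e₁,...,eₘ}. Then for n ≥ 1 every B-relative n-cochain ρ ∈ C_Bⁿ(A,M) satisfies ρ(a₁,...,aₙ) = Σ_{i=1}^{m} eᵢ·ρ(a₁eᵢ, a₂eᵢ, ..., aₙeᵢ)·eᵢ for all a₁,...,aₙ ∈ A, and the maps ρ ↦ (ρ|_{A₁},...,ρ|_{Aₘ}) and back define mutually inverse bounded linear isomorphisms between C_Bⁿ(A,M) and ⊕ᵢ Cⁿ(Aᵢ, eᵢMeᵢ). -/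
/-!
The idempotents `eᵢ` are central, orthogonal and sum to `1`. Expanding `ρ(a₁, …, aₙ)` with
`aₖ = ∑ᵢ aₖeᵢ`, every mixed term `ρ(…, aⱼeᵢ, aⱼ₊₁eᵢ', …)` with `i ≠ i'` vanishes, since relativity
moves `eᵢ` into the next slot where `eᵢeᵢ' = 0`; relativity at the two outer slots puts each
diagonal term into `eᵢMeᵢ`. Conversely, `B` is the span of the `eᵢ` (a finite-dimensional, hence
closed, subalgebra), so relativity over `B` reduces by linearity to relativity over the `eᵢ`,
which `∑ᵢ σᵢ ∘ projᵢ` has because each `σᵢ` takes values in `eᵢMeᵢ`.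
-/

open Finset Function Pointwise

section Idempotents

variable {𝕜 R M ι : Type*} [Semiring 𝕜] [Ring R] [Module 𝕜 R] [AddCommGroup M] [Module 𝕜 M]
  {e : ι → R}

lemma Fin.exists_apply_castSucc_ne_apply_succ {α : Type*} {n : ℕ} {f : Fin (n + 1) → α}
    (h : ∀ x, f ≠ fun _ => x) : ∃ j : Fin n, f j.castSucc ≠ f j.succ := by
  by_contra! hconst
  refine h (f 0) (funext fun k => ?_)
  induction k using Fin.induction with
  | zero => rfl
  | succ j ih => rw [← hconst j, ih]

variable {n : ℕ} (ρ : MultilinearMap 𝕜 (fun _ : Fin (n + 1) => R) M)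

lemma MultilinearMap.map_mul_idempotents_eq_zero (he : OrthogonalIdempotents e)
    (hcomm : ∀ i x, Commute (e i) x)
    (hmid : ∀ i (a : Fin (n + 1) → R) (j : Fin n),
      ρ (update a j.castSucc (a j.castSucc * e i)) = ρ (update a j.succ (e i * a j.succ)))
    (a : Fin (n + 1) → R) {f : Fin (n + 1) → ι} {j : Fin n} (hj : f j.castSucc ≠ f j.succ) :
    ρ (fun k => a k * e (f k)) = 0 := by
  set v : Fin (n + 1) → R := fun k => a k * e (f k)
  have hfix : update v j.castSucc (v j.castSucc * e (f j.castSucc)) = v := by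
    simp [v, mul_assoc, (he.idem _).eq]
  -- `e (f j.castSucc)` moves to the next slot, where it meets the orthogonal `e (f j.succ)`.
  have hkill : e (f j.castSucc) * v j.succ = 0 := by
    rw [← mul_assoc, (hcomm _ _).eq, mul_assoc, he.ortho hj, mul_zero]
  rw [← hfix, hmid]
  exact ρ.map_coord_zero j.succ (by rw [update_self, hkill])

lemma MultilinearMap.map_eq_sum_mul_idempotent [Fintype ι] [DecidableEq ι]
    (he : CompleteOrthogonalIdempotents e) (hcomm : ∀ i x, Commute (e i) x)
    (hmid : ∀ i (a : Fin (n + 1) → R) (j : Fin n),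
      ρ (update a j.castSucc (a j.castSucc * e i)) = ρ (update a j.succ (e i * a j.succ)))
    (a : Fin (n + 1) → R) :
    ρ a = ∑ i, ρ (fun k => a k * e i) := by
  have hexpand : ρ a = ∑ f : Fin (n + 1) → ι, ρ (fun k => a k * e (f k)) := by
    conv_lhs => rw [show a = fun k => ∑ i, a k * e i by simp [← mul_sum, he.complete]]
    exact ρ.map_sum _
  have hconst : ∑ f ∈ univ.image fun i (_ : Fin (n + 1)) => i, ρ (fun k => a k * e (f k)) =
      ∑ i, ρ (fun k => a k * e i) :=
    sum_image fun i _ i' _ h => congrFun h 0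
  rw [hexpand, ← hconst]
  refine (sum_subset (subset_univ _) fun f _ hf => ?_).symm
  obtain ⟨j, hj⟩ := Fin.exists_apply_castSucc_ne_apply_succ (f := f)
    fun i hfi => hf (mem_image.2 ⟨i, mem_univ i, hfi.symm⟩)
  exact ρ.map_mul_idempotents_eq_zero he.toOrthogonalIdempotents hcomm hmid a hj

end Idempotents

section Relative

variable {𝕜 R M : Type*} [NontriviallyNormedField 𝕜] [NormedRing R] [NormedAlgebra 𝕜 R]
  [NormedAddCommGroup M] [NormedSpace 𝕜 M] {n : ℕ}

structure IsRelativeCochain (l : R →L[𝕜] M →L[𝕜] M) (r : M →L[𝕜] R →L[𝕜] M) (S : Set R)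
    (ρ : (Fin (n + 1) → R) → M) : Prop where
  left : ∀ b ∈ S, ∀ a : Fin (n + 1) → R, ρ (update a 0 (b * a 0)) = l b (ρ a)
  middle : ∀ b ∈ S, ∀ a : Fin (n + 1) → R, ∀ j : Fin n,
    ρ (update a j.castSucc (a j.castSucc * b)) = ρ (update a j.succ (b * a j.succ))
  right : ∀ b ∈ S, ∀ a : Fin (n + 1) → R,
    ρ (update a (Fin.last n) (a (Fin.last n) * b)) = r (ρ a) b

namespace IsRelativeCochain

variable {l : R →L[𝕜] M →L[𝕜] M} {r : M →L[𝕜] R →L[𝕜] M} {S T : Set R}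

lemma mono {ρ : (Fin (n + 1) → R) → M} (h : IsRelativeCochain l r T ρ) (hST : S ⊆ T) :
    IsRelativeCochain l r S ρ :=
  ⟨fun b hb => h.left b (hST hb), fun b hb => h.middle b (hST hb),
    fun b hb => h.right b (hST hb)⟩

/-- Both sides of each relativity identity are linear in `b`. -/
lemma span {ρ : MultilinearMap 𝕜 (fun _ : Fin (n + 1) => R) M} (h : IsRelativeCochain l r S ρ) :
    IsRelativeCochain l r (Submodule.span 𝕜 S) ρ where
  left _ hb a := LinearMap.eqOn_span (R := 𝕜)
    (f := ρ.toLinearMap a 0 ∘ₗ LinearMap.mulRight 𝕜 (a 0))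
    (g := ((ContinuousLinearMap.apply 𝕜 M (ρ a)).comp l : R →L[𝕜] M))
    (fun b hb => h.left b hb a) hb
  middle _ hb a j := LinearMap.eqOn_span (R := 𝕜)
    (f := ρ.toLinearMap a j.castSucc ∘ₗ LinearMap.mulLeft 𝕜 (a j.castSucc))
    (g := ρ.toLinearMap a j.succ ∘ₗ LinearMap.mulRight 𝕜 (a j.succ))
    (fun b hb => h.middle b hb a j) hb
  right _ hb a := LinearMap.eqOn_span (R := 𝕜)
    (f := ρ.toLinearMap a (Fin.last n) ∘ₗ LinearMap.mulLeft 𝕜 (a (Fin.last n)))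
    (g := (r (ρ a) : R →ₗ[𝕜] M))
    (fun b hb => h.right b hb a) hb

lemma map_mul_idempotent_eq_corner {ρ : (Fin (n + 1) → R) → M} (h : IsRelativeCochain l r S ρ)
    {e : R} (heS : e ∈ S) (he : IsIdempotentElem e) (hcomm : ∀ x, Commute e x)
    (a : Fin (n + 1) → R) :
    ρ (fun k => a k * e) = l e (r (ρ fun k => a k * e) e) := by
  set v : Fin (n + 1) → R := fun k => a k * e
  have hleft : update v 0 (e * v 0) = v := by
    simp [v, (hcomm _).eq, mul_assoc, he.eq]
  have hright : update v (Fin.last n) (v (Fin.last n) * e) = v := by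
    simp [v, mul_assoc, he.eq]
  rw [← h.right e heS v, hright, ← h.left e heS v, hleft]

end IsRelativeCochain

end Relative

lemma CompleteOrthogonalIdempotents.closure_adjoin_subset_span
    {𝕜 R ι : Type*} [NontriviallyNormedField 𝕜] [CompleteSpace 𝕜] [NormedRing R]
    [NormedAlgebra 𝕜 R] [Fintype ι] {e : ι → R} (he : CompleteOrthogonalIdempotents e) :
    closure (Algebra.adjoin 𝕜 (Set.range e) : Set R) ⊆ Submodule.span 𝕜 (Set.range e) := by
  have hmul : Set.range e * Set.range e ⊆ (Submodule.span 𝕜 (Set.range e) : Set R) := by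
    refine Set.mul_subset_iff.2 ?_
    rintro _ ⟨i, rfl⟩ _ ⟨j, rfl⟩
    obtain rfl | hij := eq_or_ne i j
    · rw [(he.idem i).eq]; exact Submodule.subset_span ⟨i, rfl⟩
    · rw [he.ortho hij]; exact Submodule.zero_mem _
  have hone : (1 : R) ∈ Submodule.span 𝕜 (Set.range e) :=
    he.complete ▸ Submodule.sum_mem _ fun i _ => Submodule.subset_span ⟨i, rfl⟩
  let spanAlg : Subalgebra 𝕜 R := (Submodule.span 𝕜 (Set.range e)).toSubalgebra hone
    fun _ _ hx hy =>
      Submodule.span_le.2 hmul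
        (Submodule.span_mul_span 𝕜 (Set.range e) (Set.range e) ▸ Submodule.mul_mem_mul hx hy)
  have := FiniteDimensional.span_of_finite 𝕜 (Set.finite_range e)
  exact closure_minimal (Algebra.adjoin_le (s := Set.range e) (S := spanAlg) Submodule.subset_span)
    (Submodule.closed_of_finiteDimensional _)

lemma ContinuousLinearMap.norm_proj_le_one {𝕜 ι : Type*} [NontriviallyNormedField 𝕜] [Fintype ι]
    {E : ι → Type*} [∀ i, SeminormedAddCommGroup (E i)] [∀ i, NormedSpace 𝕜 (E i)] (i : ι) :
    ‖ContinuousLinearMap.proj (R := 𝕜) (φ := E) i‖ ≤ 1 :=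
  opNorm_le_bound _ zero_le_one fun x => by simpa using norm_le_pi_norm x i

section Pi

variable {ι : Type*} {A : ι → Type*}

lemma Pi.mul_single_one [DecidableEq ι] [∀ i, Semiring (A i)] (a : ∀ i, A i) (i : ι) :
    a * Pi.single i 1 = Pi.single i (a i) := by
  simpa using (Pi.single_mul_right (f := a) (1 : A i)).symm

lemma Pi.single_one_mul [DecidableEq ι] [∀ i, Semiring (A i)] (a : ∀ i, A i) (i : ι) :
    Pi.single i 1 * a = Pi.single i (a i) := by
  simpa using (Pi.single_mul_left (f := a) (1 : A i)).symm

lemma Pi.commute_single_one [DecidableEq ι] [∀ i, Semiring (A i)] (i : ι) (a : ∀ i, A i) :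
    Commute (Pi.single i 1) a := by
  rw [Commute, SemiconjBy, Pi.single_one_mul, Pi.mul_single_one]

variable {𝕜 M : Type*} [Semiring 𝕜] [∀ i, AddCommMonoid (A i)] [∀ i, Module 𝕜 (A i)]
  [AddCommMonoid M] [Module 𝕜 M] {κ : Type*}

lemma sum_map_apply_eq_of_apply_ne_eq_zero [Fintype ι]
    (σ : ∀ i, MultilinearMap 𝕜 (fun _ : κ => A i) M)
    {w : κ → ∀ i, A i} {i : ι} {k₀ : κ} (hw : ∀ j ≠ i, w k₀ j = 0) :
    ∑ j, σ j (fun k => w k j) = σ i (fun k => w k i) :=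
  sum_eq_single_of_mem i (mem_univ i) fun j _ hj => (σ j).map_coord_zero k₀ (hw j hj)

lemma sum_map_apply_update_single [Fintype ι] [DecidableEq ι] [DecidableEq κ]
    (σ : ∀ i, MultilinearMap 𝕜 (fun _ : κ => A i) M)
    (a : κ → ∀ i, A i) (i : ι) (p : κ) :
    ∑ j, σ j (fun k => update a p (Pi.single i (a p i)) k j) = σ i (fun k => a k i) := by
  rw [sum_map_apply_eq_of_apply_ne_eq_zero σ (i := i) (k₀ := p) fun j hj => by simp [hj]]
  congr 1
  ext k
  rcases eq_or_ne k p with rfl | hk <;> simp [*]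

end Pi

section Bimodule

variable {𝕜 R M ι : Type*} [NontriviallyNormedField 𝕜] [NormedRing R] [NormedAlgebra 𝕜 R]
  [NormedAddCommGroup M] [NormedSpace 𝕜 M] [DecidableEq ι]
  {l : R →L[𝕜] M →L[𝕜] M} {r : M →L[𝕜] R →L[𝕜] M} {e : ι → R}

lemma left_apply_of_mem_corner (hl : ∀ a b x, l (a * b) x = l a (l b x))
    (he : OrthogonalIdempotents e) {x : M} {j : ι} (hx : l (e j) (r x (e j)) = x) (i : ι) :
    l (e i) x = if i = j then x else 0 := by
  conv_lhs => rw [← hx, ← hl, he.mul_eq]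
  split_ifs with hij
  · rw [hij, hx]
  · simp

lemma right_apply_of_mem_corner (hr : ∀ x a b, r (r x a) b = r x (a * b))
    (hc : ∀ a x b, l a (r x b) = r (l a x) b)
    (he : OrthogonalIdempotents e) {x : M} {j : ι} (hx : l (e j) (r x (e j)) = x) (i : ι) :
    r x (e i) = if j = i then x else 0 := by
  conv_lhs => rw [← hx, ← hc, hr, he.mul_eq]
  split_ifs with hji
  · rw [hx]
  · rw [map_zero, map_zero]

end Bimodule

namespace ContinuousMultilinearMap

variable {𝕜 ι κ M : Type*} [NontriviallyNormedField 𝕜] [Fintype ι] {A : ι → Type*}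
  [∀ i, NormedAddCommGroup (A i)] [∀ i, NormedSpace 𝕜 (A i)] [NormedAddCommGroup M]
  [NormedSpace 𝕜 M]

noncomputable def sumCompProj (σ : ∀ i, ContinuousMultilinearMap 𝕜 (fun _ : κ => A i) M) :
    ContinuousMultilinearMap 𝕜 (fun _ : κ => ∀ i, A i) M :=
  ∑ i, (σ i).compContinuousLinearMap fun _ => ContinuousLinearMap.proj i

variable (σ : ∀ i, ContinuousMultilinearMap 𝕜 (fun _ : κ => A i) M)

lemma sumCompProj_apply (a : κ → ∀ i, A i) : sumCompProj σ a = ∑ i, σ i (fun k => a k i) := by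
  simp [sumCompProj]

lemma norm_compContinuousLinearMap_proj_le [Fintype κ] {i : ι}
    (f : ContinuousMultilinearMap 𝕜 (fun _ : κ => A i) M) :
    ‖f.compContinuousLinearMap fun _ => ContinuousLinearMap.proj (φ := A) i‖ ≤ ‖f‖ :=
  calc _ ≤ ‖f‖ * ∏ _ : κ, ‖ContinuousLinearMap.proj (R := 𝕜) (φ := A) i‖ :=
        norm_compContinuousLinearMap_le _ _
    _ ≤ ‖f‖ * 1 := by
        gcongr
        exact prod_le_one (fun _ _ => ContinuousLinearMap.opNorm_nonneg _)
          fun _ _ => ContinuousLinearMap.norm_proj_le_one i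
    _ = ‖f‖ := mul_one _

lemma norm_sumCompProj_le [Fintype κ] : ‖sumCompProj σ‖ ≤ ∑ i, ‖σ i‖ :=
  (norm_sum_le _ fun i => (σ i).compContinuousLinearMap fun _ => ContinuousLinearMap.proj i).trans
    (sum_le_sum fun i _ => norm_compContinuousLinearMap_proj_le (σ i))

end ContinuousMultilinearMap

open ContinuousMultilinearMap in
lemma isRelativeCochain_sumCompProj {𝕜 ι M : Type*} [NontriviallyNormedField 𝕜] [Fintype ι]
    [DecidableEq ι] {A : ι → Type*} [∀ i, NormedRing (A i)] [∀ i, NormedAlgebra 𝕜 (A i)]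
    [NormedAddCommGroup M] [NormedSpace 𝕜 M] {n : ℕ}
    {σ : ∀ i, ContinuousMultilinearMap 𝕜 (fun _ : Fin (n + 1) => A i) M}
    {l : (∀ i, A i) →L[𝕜] M →L[𝕜] M} {r : M →L[𝕜] (∀ i, A i) →L[𝕜] M}
    (hl : ∀ a b x, l (a * b) x = l a (l b x)) (hr : ∀ x a b, r (r x a) b = r x (a * b))
    (hc : ∀ a x b, l a (r x b) = r (l a x) b)
    (hσ : ∀ i v, l (Pi.single i 1) (r (σ i v) (Pi.single i 1)) = σ i v) :
    IsRelativeCochain l r (Set.range fun i => Pi.single i 1) (sumCompProj σ) := by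
  have he := (CompleteOrthogonalIdempotents.single A).toOrthogonalIdempotents
  have hupdate : ∀ i a p, sumCompProj σ (update a p (Pi.single i (a p i))) = σ i (a · i) :=
    fun i a p => (sumCompProj_apply σ _).trans
      (sum_map_apply_update_single (fun i => (σ i).toMultilinearMap) a i p)
  refine ⟨?_, ?_, ?_⟩ <;> rintro _ ⟨i, rfl⟩ a
  · rw [Pi.single_one_mul, hupdate, sumCompProj_apply, _root_.map_sum,
      sum_congr rfl fun j _ => left_apply_of_mem_corner hl he (hσ j _) i, sum_ite_eq,
      if_pos (mem_univ i)]
  · intro j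
    rw [Pi.mul_single_one, Pi.single_one_mul, hupdate, hupdate]
  · rw [Pi.mul_single_one, hupdate, sumCompProj_apply, _root_.map_sum, FunLike.coe_sum,
      Finset.sum_apply, sum_congr rfl fun j _ => right_apply_of_mem_corner hr hc he (hσ j _) i,
      sum_ite_eq', if_pos (mem_univ i)]

theorem relative_cochains_of_direct_sum_general
    {m : ℕ} {A : Fin m → Type*}
    [∀ i, NormedRing (A i)] [∀ i, NormedAlgebra ℂ (A i)]
    {M : Type*} [NormedAddCommGroup M] [NormedSpace ℂ M]
    -- bimodule actions of `A = ⊕ᵢ Aᵢ = ∀ i, A i` on `M`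
    (l : (∀ i, A i) →L[ℂ] M →L[ℂ] M) (r : M →L[ℂ] (∀ i, A i) →L[ℂ] M)
    (hl : ∀ (a b : ∀ i, A i) (x : M), l (a * b) x = l a (l b x))
    (hr : ∀ (x : M) (a b : ∀ i, A i), r (r x a) b = r x (a * b))
    (hc : ∀ (a : ∀ i, A i) (x : M) (b : ∀ i, A i), l a (r x b) = r (l a x) b)
    (n : ℕ) :
    -- `e i` is the `i`-th canonical central idempotent, `B` the closed
    -- subalgebra generated by the `e i`
    let e : Fin m → (∀ i, A i) := fun i => Pi.single i 1
    let B : Set (∀ i, A i) :=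
      closure ((Algebra.adjoin ℂ (Set.range e) : Subalgebra ℂ (∀ i, A i)) :
        Set (∀ i, A i))
    -- `B`-relativity of an `(n+1)`-cochain
    let Rel : ((Fin (n + 1) → ∀ i, A i) → M) → Prop := fun ρ =>
      (∀ b ∈ B, ∀ a : Fin (n + 1) → ∀ i, A i,
          ρ (Function.update a 0 (b * a 0)) = l b (ρ a)) ∧
      (∀ b ∈ B, ∀ a : Fin (n + 1) → ∀ i, A i, ∀ j : Fin n,
          ρ (Function.update a j.castSucc (a j.castSucc * b))
            = ρ (Function.update a j.succ (b * a j.succ))) ∧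
      (∀ b ∈ B, ∀ a : Fin (n + 1) → ∀ i, A i,
          ρ (Function.update a (Fin.last n) (a (Fin.last n) * b)) = r (ρ a) b)
    -- the reconstruction map `G`
    let G : (∀ i, (Fin (n + 1) → A i) → M) → (Fin (n + 1) → ∀ i, A i) → M :=
      fun σ a => ∑ i, σ i (fun k => a k i)
    -- (1) the decomposition identity for `B`-relative cochains
    (∀ ρ : ContinuousMultilinearMap ℂ (fun _ : Fin (n + 1) => ∀ i, A i) M,
      Rel (⇑ρ) → ∀ a : Fin (n + 1) → ∀ i, A i,
        ρ a = ∑ i, l (e i) (r (ρ fun k => a k * e i) (e i)))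
    -- (2) `G ∘ J = id` on `B`-relative cochains
    ∧ (∀ ρ : ContinuousMultilinearMap ℂ (fun _ : Fin (n + 1) => ∀ i, A i) M,
      Rel (⇑ρ) →
        G (fun i v => ρ fun k => Pi.single i (v k)) = ⇑ρ)
    -- (3) `J ∘ G = id` on families of bounded cochains valued in `eᵢMeᵢ`
    ∧ (∀ σ : ∀ i, ContinuousMultilinearMap ℂ (fun _ : Fin (n + 1) => A i) M,
      (∀ i v, l (e i) (r (σ i v) (e i)) = σ i v) →
        ∀ i (v : Fin (n + 1) → A i),
          G (fun j w => σ j w) (fun k => Pi.single i (v k)) = σ i v)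
    -- (4) both maps are bounded: `J` does not increase norms, and `G` produces
    -- a bounded `B`-relative multilinear cochain
    ∧ (∀ ρ : ContinuousMultilinearMap ℂ (fun _ : Fin (n + 1) => ∀ i, A i) M,
      Rel (⇑ρ) → ∀ i, ∃ ρi : ContinuousMultilinearMap ℂ (fun _ : Fin (n + 1) => A i) M,
        (⇑ρi = fun v => ρ fun k => Pi.single i (v k)) ∧ ‖ρi‖ ≤ ‖ρ‖)
    ∧ (∀ σ : ∀ i, ContinuousMultilinearMap ℂ (fun _ : Fin (n + 1) => A i) M,
      (∀ i v, l (e i) (r (σ i v) (e i)) = σ i v) →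
        ∃ τ : ContinuousMultilinearMap ℂ (fun _ : Fin (n + 1) => ∀ i, A i) M,
          (⇑τ = G fun i => ⇑(σ i)) ∧ Rel (⇑τ) ∧ ‖τ‖ ≤ ∑ i, ‖σ i‖) := by
  intro e B Rel G
  have he := CompleteOrthogonalIdempotents.single A
  have hBspan : B ⊆ Submodule.span ℂ (Set.range e) := he.closure_adjoin_subset_span
  have hrel : ∀ ρ, Rel ρ → IsRelativeCochain l r (Set.range e) ρ := fun ρ hρ =>
    IsRelativeCochain.mono ⟨hρ.1, hρ.2.1, hρ.2.2⟩
      fun _ hx => subset_closure (Algebra.subset_adjoin hx)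
  have hdecomp : ∀ ρ : ContinuousMultilinearMap ℂ (fun _ : Fin (n + 1) => ∀ i, A i) M, Rel ρ →
      ∀ a, ρ a = ∑ i, ρ (fun k => a k * e i) := fun ρ hρ =>
    ρ.toMultilinearMap.map_eq_sum_mul_idempotent he Pi.commute_single_one
      fun i => (hrel ρ hρ).middle _ ⟨i, rfl⟩
  refine ⟨fun ρ hρ a => ?_, fun ρ hρ => funext fun a => ?_, fun σ _ i v => ?_,
    fun ρ _ i => ?_, fun σ hσ => ?_⟩
  · rw [hdecomp ρ hρ a]
    exact sum_congr rfl fun i _ =>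
      (hrel ρ hρ).map_mul_idempotent_eq_corner ⟨i, rfl⟩ (he.idem i) (Pi.commute_single_one i) a
  · simp only [G, hdecomp ρ hρ a, Pi.mul_single_one, e]
  · refine (sum_map_apply_eq_of_apply_ne_eq_zero (fun j => (σ j).toMultilinearMap)
      (w := fun k => Pi.single i (v k)) (k₀ := 0) fun j hj => Pi.single_eq_of_ne hj _).trans ?_
    simp
  · exact ⟨ρ.compContinuousLinearMap fun _ => (LinearIsometry.single ℂ A i).toContinuousLinearMap,
      rfl, ρ.norm_compContinuous_linearIsometry_le _⟩
  · obtain ⟨hleft, hmiddle, hright⟩ :=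
      ((isRelativeCochain_sumCompProj hl hr hc hσ).span).mono hBspan
    exact ⟨_, funext (ContinuousMultilinearMap.sumCompProj_apply σ), ⟨hleft, hmiddle, hright⟩,
      ContinuousMultilinearMap.norm_sumCompProj_le σ⟩

theorem relative_cochains_of_direct_sum
    {m : ℕ} {A : Fin m → Type*}
    [∀ i, NormedRing (A i)] [∀ i, NormedAlgebra ℂ (A i)] [∀ i, CompleteSpace (A i)]
    {M : Type*} [NormedAddCommGroup M] [NormedSpace ℂ M] [CompleteSpace M]
    -- bimodule actions of `A = ⊕ᵢ Aᵢ = ∀ i, A i` on `M`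
    (l : (∀ i, A i) →L[ℂ] M →L[ℂ] M) (r : M →L[ℂ] (∀ i, A i) →L[ℂ] M)
    (hl : ∀ (a b : ∀ i, A i) (x : M), l (a * b) x = l a (l b x))
    (hr : ∀ (x : M) (a b : ∀ i, A i), r (r x a) b = r x (a * b))
    (hc : ∀ (a : ∀ i, A i) (x : M) (b : ∀ i, A i), l a (r x b) = r (l a x) b)
    (n : ℕ) :
    -- `e i` is the `i`-th canonical central idempotent, `B` the closed
    -- subalgebra generated by the `e i`
    let e : Fin m → (∀ i, A i) := fun i => Pi.single i 1
    let B : Set (∀ i, A i) :=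
      closure ((Algebra.adjoin ℂ (Set.range e) : Subalgebra ℂ (∀ i, A i)) :
        Set (∀ i, A i))
    -- `B`-relativity of an `(n+1)`-cochain
    let Rel : ((Fin (n + 1) → ∀ i, A i) → M) → Prop := fun ρ =>
      (∀ b ∈ B, ∀ a : Fin (n + 1) → ∀ i, A i,
          ρ (Function.update a 0 (b * a 0)) = l b (ρ a)) ∧
      (∀ b ∈ B, ∀ a : Fin (n + 1) → ∀ i, A i, ∀ j : Fin n,
          ρ (Function.update a j.castSucc (a j.castSucc * b))
            = ρ (Function.update a j.succ (b * a j.succ))) ∧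
      (∀ b ∈ B, ∀ a : Fin (n + 1) → ∀ i, A i,
          ρ (Function.update a (Fin.last n) (a (Fin.last n) * b)) = r (ρ a) b)
    -- the reconstruction map `G`
    let G : (∀ i, (Fin (n + 1) → A i) → M) → (Fin (n + 1) → ∀ i, A i) → M :=
      fun σ a => ∑ i, σ i (fun k => a k i)
    -- (1) the decomposition identity for `B`-relative cochains
    (∀ ρ : ContinuousMultilinearMap ℂ (fun _ : Fin (n + 1) => ∀ i, A i) M,
      Rel (⇑ρ) → ∀ a : Fin (n + 1) → ∀ i, A i,
        ρ a = ∑ i, l (e i) (r (ρ fun k => a k * e i) (e i)))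
    -- (2) `G ∘ J = id` on `B`-relative cochains
    ∧ (∀ ρ : ContinuousMultilinearMap ℂ (fun _ : Fin (n + 1) => ∀ i, A i) M,
      Rel (⇑ρ) →
        G (fun i v => ρ fun k => Pi.single i (v k)) = ⇑ρ)
    -- (3) `J ∘ G = id` on families of bounded cochains valued in `eᵢMeᵢ`
    ∧ (∀ σ : ∀ i, ContinuousMultilinearMap ℂ (fun _ : Fin (n + 1) => A i) M,
      (∀ i v, l (e i) (r (σ i v) (e i)) = σ i v) →
        ∀ i (v : Fin (n + 1) → A i),
          G (fun j w => σ j w) (fun k => Pi.single i (v k)) = σ i v)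
    -- (4) both maps are bounded: `J` does not increase norms, and `G` produces
    -- a bounded `B`-relative multilinear cochain
    ∧ (∀ ρ : ContinuousMultilinearMap ℂ (fun _ : Fin (n + 1) => ∀ i, A i) M,
      Rel (⇑ρ) → ∀ i, ∃ ρi : ContinuousMultilinearMap ℂ (fun _ : Fin (n + 1) => A i) M,
        (⇑ρi = fun v => ρ fun k => Pi.single i (v k)) ∧ ‖ρi‖ ≤ ‖ρ‖)
    ∧ (∀ σ : ∀ i, ContinuousMultilinearMap ℂ (fun _ : Fin (n + 1) => A i) M,
      (∀ i v, l (e i) (r (σ i v) (e i)) = σ i v) →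
        ∃ τ : ContinuousMultilinearMap ℂ (fun _ : Fin (n + 1) => ∀ i, A i) M,
          (⇑τ = G fun i => ⇑(σ i)) ∧ Rel (⇑τ) ∧ ‖τ‖ ≤ ∑ i, ‖σ i‖) :=
  relative_cochains_of_direct_sum_general l r hl hr hc n
end

section
/- Let H be an infinite-dimensional Hilbert space. Then every continuous trace on B(H) is zero: if f is a bounded linear functional on the Banach algebra B(H) of all bounded operators on H with f(ab) = f(ba) for all a,b ∈ B(H), then f = 0. -/
/-!
A Hilbert basis of `H` is infinite, so it splits into two copies of itself; this gives two
isometries `v₀, v₁` of `H` with orthogonal ranges. The ampliation `a ↦ v₀ a v₀† + v₁ a v₁†` does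
not increase norms, while a trace `f` satisfies `f (v a v†) = f (a v† v) = f a`, so the ampliation
doubles `f`. Hence `2 ‖f a‖ ≤ ‖f‖ ‖a‖` for all `a`, that is `‖f‖ ≤ ‖f‖ / 2`.
-/

open scoped InnerProductSpace InnerProduct

section

variable {𝕜 E F : Type*} [RCLike 𝕜]
  [NormedAddCommGroup E] [InnerProductSpace 𝕜 E] [NormedAddCommGroup F] [InnerProductSpace 𝕜 F]

namespace HilbertBasis

variable {ι : Type*}

theorem infinite_of_not_finiteDimensional (b : HilbertBasis ι 𝕜 E)
    (h : ¬ FiniteDimensional 𝕜 E) : Infinite ι := by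
  refine not_finite_iff_infinite.mp fun _ => h ?_
  have := Fintype.ofFinite ι
  exact .of_basis b.toOrthonormalBasis.toBasis

theorem exists_linearIsometry_apply_eq [CompleteSpace F] (b : HilbertBasis ι 𝕜 E) {c : ι → F}
    (hc : Orthonormal 𝕜 c) : ∃ V : E →ₗᵢ[𝕜] F, ∀ i, V (b i) = c i := by
  classical
  refine ⟨hc.orthogonalFamily.linearIsometry.comp b.repr.toLinearIsometry, fun i => ?_⟩
  simp [b.repr_self, OrthogonalFamily.linearIsometry_apply_single]

theorem inner_map_map_eq_zero (b : HilbertBasis ι 𝕜 E) (V W : E →L[𝕜] F)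
    (h : ∀ i j, ⟪V (b i), W (b j)⟫_𝕜 = 0) (x y : E) : ⟪V x, W y⟫_𝕜 = 0 := by
  have hb := Submodule.dense_iff_topologicalClosure_eq_top.mpr b.dense_span
  have hW : ∀ i, (innerSL 𝕜 (V (b i))).comp W = 0 := fun i =>
    ContinuousLinearMap.ext_on hb fun _ ⟨j, hj⟩ => hj ▸ h i j
  have hV : (innerSL 𝕜 (W y)).comp V = 0 :=
    ContinuousLinearMap.ext_on hb fun _ ⟨i, hi⟩ => by
      simpa [← hi, inner_eq_zero_symm] using congr($(hW i) y)
  simpa [inner_eq_zero_symm] using congr($hV x)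

end HilbertBasis

theorem exists_isometry_pair_inner_eq_zero [CompleteSpace E] (h : ¬ FiniteDimensional 𝕜 E) :
    ∃ v₀ v₁ : E →L[𝕜] E, Isometry v₀ ∧ Isometry v₁ ∧ ∀ x y, ⟪v₀ x, v₁ y⟫_𝕜 = 0 := by
  obtain ⟨w, b, -⟩ := exists_hilbertBasis 𝕜 E
  have := b.infinite_of_not_finiteDimensional h
  obtain ⟨e⟩ : Nonempty (w ⊕ w ≃ w) := Cardinal.eq.1 (by simp)
  have hc : Orthonormal 𝕜 (b ∘ e) := b.orthonormal.comp _ e.injective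
  obtain ⟨v₀, hv₀⟩ := b.exists_linearIsometry_apply_eq (hc.comp _ Sum.inl_injective)
  obtain ⟨v₁, hv₁⟩ := b.exists_linearIsometry_apply_eq (hc.comp _ Sum.inr_injective)
  refine ⟨v₀.toContinuousLinearMap, v₁.toContinuousLinearMap, v₀.isometry, v₁.isometry,
    b.inner_map_map_eq_zero _ _ fun i j => ?_⟩
  simpa [hv₀, hv₁] using hc.2 Sum.inl_ne_inr

theorem map_mul_mul_eq_of_mul_eq_one {R M : Type*} [Monoid R] (f : R → M)
    (hf : ∀ a b, f (a * b) = f (b * a)) {v w : R} (hwv : w * v = 1) (a : R) :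
    f (v * a * w) = f a := by
  rw [mul_assoc, hf, mul_assoc, hwv, mul_one]

theorem ContinuousLinearMap.eq_zero_of_map_eq_two_smul {A G : Type*} [NormedAddCommGroup A]
    [NormedSpace 𝕜 A] [NormedAddCommGroup G] [NormedSpace 𝕜 G] (f : A →L[𝕜] G) (T : A → A)
    (hT : ∀ a, ‖T a‖ ≤ ‖a‖) (hf : ∀ a, f (T a) = 2 • f a) : f = 0 := by
  have hle : ‖f‖ ≤ ‖f‖ / 2 := f.opNorm_le_bound (by positivity) fun a => by
    have : 2 * ‖f a‖ ≤ ‖f‖ * ‖a‖ := calc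
      2 * ‖f a‖ = ‖f (T a)‖ := by rw [hf, RCLike.norm_nsmul 𝕜, nsmul_eq_mul, Nat.cast_ofNat]
      _ ≤ ‖f‖ * ‖T a‖ := f.le_opNorm _
      _ ≤ ‖f‖ * ‖a‖ := by gcongr; exact hT a
    linarith
  exact f.opNorm_zero_iff.mp (by linarith [norm_nonneg f])

namespace ContinuousLinearMap

noncomputable def ampliation [CompleteSpace E] [CompleteSpace F] (v₀ v₁ : E →L[𝕜] F)
    (a : E →L[𝕜] E) : F →L[𝕜] F :=
  v₀ ∘L a ∘L v₀† + v₁ ∘L a ∘L v₁†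

variable {v₀ v₁ : E →L[𝕜] F}

theorem norm_map_add_map_sq (h₀ : Isometry v₀) (h₁ : Isometry v₁)
    (h : ∀ x y, ⟪v₀ x, v₁ y⟫_𝕜 = 0) (x y : E) :
    ‖v₀ x + v₁ y‖ ^ 2 = ‖x‖ ^ 2 + ‖y‖ ^ 2 := by
  rw [sq, sq, sq, norm_add_sq_eq_norm_sq_add_norm_sq_of_inner_eq_zero _ _ (h x y),
    h₀.norm_map_of_map_zero (map_zero v₀), h₁.norm_map_of_map_zero (map_zero v₁)]

variable [CompleteSpace E] [CompleteSpace F]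

theorem norm_sq_adjoint_add_norm_sq_adjoint_le (h₀ : Isometry v₀) (h₁ : Isometry v₁)
    (h : ∀ x y, ⟪v₀ x, v₁ y⟫_𝕜 = 0) (x : F) :
    ‖(v₀†) x‖ ^ 2 + ‖(v₁†) x‖ ^ 2 ≤ ‖x‖ ^ 2 := by
  set u := v₀ ((v₀†) x) + v₁ ((v₁†) x)
  have hu : ‖u‖ ^ 2 = ‖(v₀†) x‖ ^ 2 + ‖(v₁†) x‖ ^ 2 := norm_map_add_map_sq h₀ h₁ h _ _
  have hux : RCLike.re ⟪u, x⟫_𝕜 = ‖u‖ ^ 2 := by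
    simp [u, hu, inner_add_left, ← adjoint_inner_right]
  nlinarith [re_inner_le_norm (𝕜 := 𝕜) u x, norm_nonneg u, norm_nonneg x]

theorem norm_ampliation_le (h₀ : Isometry v₀) (h₁ : Isometry v₁)
    (h : ∀ x y, ⟪v₀ x, v₁ y⟫_𝕜 = 0) (a : E →L[𝕜] E) :
    ‖ampliation v₀ v₁ a‖ ≤ ‖a‖ := by
  refine opNorm_le_bound _ (norm_nonneg a) fun x => ?_
  refine (pow_le_pow_iff_left₀ (norm_nonneg _) (by positivity) two_ne_zero).mp ?_
  calc ‖ampliation v₀ v₁ a x‖ ^ 2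
      = ‖a ((v₀†) x)‖ ^ 2 + ‖a ((v₁†) x)‖ ^ 2 := norm_map_add_map_sq h₀ h₁ h _ _
    _ ≤ (‖a‖ * ‖(v₀†) x‖) ^ 2 + (‖a‖ * ‖(v₁†) x‖) ^ 2 := by gcongr <;> exact a.le_opNorm _
    _ = ‖a‖ ^ 2 * (‖(v₀†) x‖ ^ 2 + ‖(v₁†) x‖ ^ 2) := by ring
    _ ≤ (‖a‖ * ‖x‖) ^ 2 := by
        rw [mul_pow]; gcongr; exact norm_sq_adjoint_add_norm_sq_adjoint_le h₀ h₁ h x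

theorem map_ampliation {M Φ : Type*} [AddCommMonoid M] [FunLike Φ (E →L[𝕜] E) M]
    [AddMonoidHomClass Φ (E →L[𝕜] E) M] (f : Φ)
    (hf : ∀ a b, f (a * b) = f (b * a)) {v₀ v₁ : E →L[𝕜] E} (h₀ : Isometry v₀)
    (h₁ : Isometry v₁) (a : E →L[𝕜] E) :
    f (ampliation v₀ v₁ a) = 2 • f a := by
  rw [ampliation, map_add, two_smul]
  congr 1
  · exact map_mul_mul_eq_of_mul_eq_one f hf ((isometry_iff_adjoint_comp_self _).mp h₀) a
  · exact map_mul_mul_eq_of_mul_eq_one f hf ((isometry_iff_adjoint_comp_self _).mp h₁) a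

end ContinuousLinearMap

end

theorem trace_on_bounded_operators_eq_zero
    {H : Type*} [NormedAddCommGroup H] [InnerProductSpace ℂ H] [CompleteSpace H]
    (hinf : ¬ FiniteDimensional ℂ H)
    (f : (H →L[ℂ] H) →L[ℂ] ℂ)
    (htr : ∀ a b : H →L[ℂ] H, f (a * b) = f (b * a)) :
    f = 0 := by
  obtain ⟨v₀, v₁, h₀, h₁, h⟩ := exists_isometry_pair_inner_eq_zero hinf
  exact f.eq_zero_of_map_eq_two_smul (ContinuousLinearMap.ampliation v₀ v₁)
    (ContinuousLinearMap.norm_ampliation_le h₀ h₁ h)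
    (ContinuousLinearMap.map_ampliation f htr h₀ h₁)
end
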